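/- For every integer n ≥ 1 and every constant C₁ > 0 there exists a constant C > 0 depending only on n and C₁ with the following property: for all t ∈ (0, 1], all d ≥ 0, and all real numbers h > 0 and h_N such that |h − h_N| ≤ C₁ · t⁴ · exp(−d²/(5t)) and (1/2) (4πt)^{−n/2} exp(−d²/(4t)) ≤ h_N ≤ 2 (4πt)^{−n/2} exp(−d²/(4t)), one has |ln(h/h_N)| · h ≤ C · t⁴. -/

import Mathlib

open Real

/-! Comparing `ln x ≤ x - 1` on both sides of `h = h_N` gives
`|ln(h/h_N)| · h ≤ δ + δ² / h_N` with `δ = |h - h_N|`. The linear term is `O(t⁴)` outright. In the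
quadratic term, `δ² ≤ C₁² t⁸ exp(-d²/(4t))` because `2/5 ≥ 1/4`, and the Gaussian lower bound on
`h_N` absorbs this exponential at the price of the factor `(4πt)^{n/2} ≤ (4π)^{n/2}`. -/

theorem abs_log_div_mul_le_add_sq_div {h g : ℝ} (hh : 0 < h) (hg : 0 < g) :
    |log (h / g)| * h ≤ |h - g| + |h - g| ^ 2 / g := by
  rcases le_or_gt h g with hle | hlt
  · have hlog : log (g / h) * h ≤ g - h := by
      calc log (g / h) * h ≤ (g / h - 1) * h := by
            gcongr; exact log_le_sub_one_of_pos (by positivity)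
        _ = g - h := by field_simp
    rw [abs_of_nonpos (log_nonpos (by positivity) (div_le_one_of_le₀ hle hg.le)),
      ← log_inv, inv_div]
    have : 0 ≤ |h - g| ^ 2 / g := by positivity
    linarith [abs_sub_comm h g, abs_of_nonneg (sub_nonneg.2 hle)]
  · rw [abs_of_nonneg (log_nonneg ((one_le_div hg).2 hlt.le)), abs_of_pos (by linarith)]
    calc log (h / g) * h ≤ (h / g - 1) * h := by
          gcongr; exact log_le_sub_one_of_pos (by positivity)
      _ = (h - g) + (h - g) ^ 2 / g := by field_simp; ring

theorem sq_exp_neg_sq_div_five_le {t : ℝ} (ht : 0 < t) (d : ℝ) :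
    exp (-d ^ 2 / (5 * t)) ^ 2 ≤ exp (-d ^ 2 / (4 * t)) := by
  rw [← exp_nat_mul, exp_le_exp, div_eq_mul_inv, div_eq_mul_inv]
  have : (4 * t)⁻¹ ≤ 2 * (5 * t)⁻¹ := by
    rw [inv_le_iff_one_le_mul₀ (by positivity)]
    field_simp
    norm_num
  push_cast
  nlinarith [sq_nonneg d]

theorem sq_exp_neg_sq_div_five_div_le {t : ℝ} (ht : 0 < t) (a d g : ℝ) (hg : 0 < g)
    (hlow : (1 / 2) * (4 * π * t) ^ (-a) * exp (-d ^ 2 / (4 * t)) ≤ g) :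
    exp (-d ^ 2 / (5 * t)) ^ 2 / g ≤ 2 * (4 * π * t) ^ a := by
  have hB : 0 < (4 * π * t) ^ a := rpow_pos_of_pos (by positivity) a
  rw [rpow_neg (by positivity)] at hlow
  rw [div_le_iff₀ hg]
  calc exp (-d ^ 2 / (5 * t)) ^ 2 ≤ exp (-d ^ 2 / (4 * t)) := sq_exp_neg_sq_div_five_le ht d
    _ = 2 * (4 * π * t) ^ a * ((1 / 2) * ((4 * π * t) ^ a)⁻¹ * exp (-d ^ 2 / (4 * t))) := by
      field_simp
    _ ≤ 2 * (4 * π * t) ^ a * g := by gcongr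

theorem log_ratio_heat_kernel_parametrix_estimate_general
    (n : ℕ) (C₁ : ℝ) (hC₁ : 0 < C₁) :
    ∃ C > (0 : ℝ), ∀ t ∈ Set.Ioc (0 : ℝ) 1, ∀ d : ℝ, 0 ≤ d →
      ∀ h h_N : ℝ, 0 < h →
        |h - h_N| ≤ C₁ * t ^ 4 * Real.exp (-d ^ 2 / (5 * t)) →
        (1 / 2) * (4 * π * t) ^ (-(n : ℝ) / 2) * Real.exp (-d ^ 2 / (4 * t)) ≤ h_N →
        h_N ≤ 2 * (4 * π * t) ^ (-(n : ℝ) / 2) * Real.exp (-d ^ 2 / (4 * t)) →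
        |Real.log (h / h_N)| * h ≤ C * t ^ 4 := by
  set K := (4 * π) ^ ((n : ℝ) / 2)
  refine ⟨C₁ + 2 * C₁ ^ 2 * K, by positivity, ?_⟩
  rintro t ⟨ht0, ht1⟩ d - h h_N hh hdiff hlow -
  set E := exp (-d ^ 2 / (5 * t))
  have hN : 0 < h_N := lt_of_lt_of_le (by positivity) hlow
  rw [neg_div] at hlow
  have hE1 : E ≤ 1 := exp_le_one_iff.2 (by rw [neg_div]; simp only [neg_nonpos]; positivity)
  have hEN : E ^ 2 / h_N ≤ 2 * K := calc
    E ^ 2 / h_N ≤ 2 * (4 * π * t) ^ ((n : ℝ) / 2) :=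
      sq_exp_neg_sq_div_five_div_le ht0 _ d h_N hN hlow
    _ ≤ 2 * K := by
      gcongr
      exact rpow_le_rpow (by positivity) (by nlinarith [pi_pos]) (by positivity)
  have ht84 : t ^ 8 ≤ t ^ 4 := pow_le_pow_of_le_one ht0.le ht1 (by norm_num)
  calc |log (h / h_N)| * h ≤ |h - h_N| + |h - h_N| ^ 2 / h_N :=
        abs_log_div_mul_le_add_sq_div hh hN
    _ ≤ C₁ * t ^ 4 * E + (C₁ * t ^ 4 * E) ^ 2 / h_N := by gcongr
    _ = C₁ * t ^ 4 * E + C₁ ^ 2 * t ^ 8 * (E ^ 2 / h_N) := by ring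
    _ ≤ C₁ * t ^ 4 * 1 + C₁ ^ 2 * t ^ 4 * (2 * K) := by gcongr
    _ = (C₁ + 2 * C₁ ^ 2 * K) * t ^ 4 := by ring

/-- Pointwise estimate (3.5): if `|h − h_N| ≤ C₁ t⁴ exp(−d²/(5t))` and
`h_N` is comparable to the Gaussian `(4πt)^{−n/2} exp(−d²/(4t))` within a
factor `2`, then `|ln(h/h_N)| · h ≤ C t⁴`. -/
theorem log_ratio_heat_kernel_parametrix_estimate
    (n : ℕ) (hn : 1 ≤ n) (C₁ : ℝ) (hC₁ : 0 < C₁) :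
    ∃ C > (0 : ℝ), ∀ t ∈ Set.Ioc (0 : ℝ) 1, ∀ d : ℝ, 0 ≤ d →
      ∀ h h_N : ℝ, 0 < h →
        |h - h_N| ≤ C₁ * t ^ 4 * Real.exp (-d ^ 2 / (5 * t)) →
        (1 / 2) * (4 * π * t) ^ (-(n : ℝ) / 2) * Real.exp (-d ^ 2 / (4 * t)) ≤ h_N →
        h_N ≤ 2 * (4 * π * t) ^ (-(n : ℝ) / 2) * Real.exp (-d ^ 2 / (4 * t)) →
        |Real.log (h / h_N)| * h ≤ C * t ^ 4 :=
  log_ratio_heat_kernel_parametrix_estimate_general n C₁ hC₁
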